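/- arXiv:1510.02538 — 3 statements merged into one kernel-verified Lean document; each statement's English description precedes it below -/
import Mathlib

section
/- Fix an integer N ≥ 1 and a real α > 2, and set η = N·(N!)^{-1/N} and C₅ = (4·Γ(3/2)^{2α} + (α²−4)·Γ(3/2)^{α})/(α−2)². For reals M, K > 0 and T > 0 define F(M,K,T) = Σ_{n=1}^{N} binom(N,n)·(−1)^{n+1}·exp(−T·η·n·((C₅·K + Γ(3/2)^{α})/(M+1) + 1/(α−1))). If M, M', K, K' > 0 satisfy (M'+1)·(K + Γ(3/2)^{α}/C₅) = (M+1)·(K' + Γ(3/2)^{α}/C₅), then F(M,K,T) = F(M',K',T) for every T > 0. (This is the linear scaling law (M+1) ∼ K + Γ^{α}(1.5)/C₅ preserving the approximate uplink SIR distribution for MRC receivers with full power control ε = 1 and no noise.) -/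
open Real Finset

/-- Linear scaling law `(M+1) ∼ K + Γ^α(1.5)/C₅` preserves the approximate uplink SIR
distribution for MRC receivers with full power control (ε = 1) and no noise. -/
theorem mrc_full_power_linear_scaling
    (N : ℕ) (hN : 1 ≤ N) (α : ℝ) (hα : 2 < α)
    (η C₅ : ℝ)
    (hη : η = (N : ℝ) * ((N.factorial : ℝ) ^ (-(1 : ℝ) / N)))
    (hC₅ : C₅ = (4 * Real.Gamma (3/2) ^ (2 * α) + (α ^ 2 - 4) * Real.Gamma (3/2) ^ α)
        / (α - 2) ^ 2)
    (F : ℝ → ℝ → ℝ → ℝ)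
    (hF : ∀ M K T : ℝ, F M K T =
      ∑ n ∈ Finset.Icc 1 N, (N.choose n : ℝ) * (-1 : ℝ) ^ (n + 1) *
        Real.exp (-(T * η * n * ((C₅ * K + Real.Gamma (3/2) ^ α) / (M + 1) + 1 / (α - 1)))))
    (M M' K K' : ℝ) (hM : 0 < M) (hM' : 0 < M') (hK : 0 < K) (hK' : 0 < K')
    (hscale : (M' + 1) * (K + Real.Gamma (3/2) ^ α / C₅)
            = (M + 1) * (K' + Real.Gamma (3/2) ^ α / C₅)) :
    ∀ T : ℝ, 0 < T → F M K T = F M' K' T := by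
  have hG : 0 < Real.Gamma (3/2) := Real.Gamma_pos_of_pos (by norm_num)
  have hC₅pos : 0 < C₅ := by
    rw [hC₅]
    apply div_pos
    · have h1 : 0 < Real.Gamma (3/2) ^ (2 * α) := Real.rpow_pos_of_pos hG _
      have h2 : 0 < Real.Gamma (3/2) ^ α := Real.rpow_pos_of_pos hG _
      nlinarith
    · nlinarith
  have hC₅ne : C₅ ≠ 0 := ne_of_gt hC₅pos
  have hM1 : M + 1 ≠ 0 := by linarith
  have hM'1 : M' + 1 ≠ 0 := by linarith
  have key : (C₅ * K + Real.Gamma (3/2) ^ α) / (M + 1)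
      = (C₅ * K' + Real.Gamma (3/2) ^ α) / (M' + 1) := by
    rw [div_eq_div_iff hM1 hM'1]
    have := hscale
    field_simp at this
    nlinarith [this]
  intro T hT
  rw [hF, hF, key]
end

section
/- Fix an integer N ≥ 1, reals α > 2 and ε ∈ [0,1], set η = N·(N!)^{-1/N}, C₈ = 2·Γ(ε/2+1)^{α}/((α−2) + 2·Γ(ε/2+1)^{α}), C₉ = 2·Γ(ε/2+1)^{α}/(α−2), C₆(M,K) = C₉·(1/(M−K+1) + 1/(M+1) + M(K−1)/(M−K+1)²) + M(K−1)·C₈/(M−K+1)², and C₇(M,K) = (M/(M+1))·Γ(ε+1)^{α}/(α−1) + (1/(M+1) + (K−1)M/(M−K+1)²)·C₉² + ((K−1)M/(M−K+1)²)·C₈·C₉. For M > K > 0, T > 0 define P(M,K,T) = Σ_{n=1}^{N} binom(N,n)·(−1)^{n+1}·∫₀^∞ exp(−n·η·T·(C₆(M,K)·s^{α(1−ε)/2} + C₇(M,K)·s^{α(1−ε)}) − s) ds. Then for every t ∈ (0,1) and T > 0, as M → ∞ along K = t·(M+1), P(M, t(M+1), T) converges to Σ_{n=1}^{N} binom(N,n)·(−1)^{n+1}·∫₀^∞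 exp(−n·η·T·(c₆·s^{α(1−ε)/2} + c₇·s^{α(1−ε)}) − s) ds, where c₆ = (C₈+C₉)·t/(1−t)² and c₇ = Γ(ε+1)^{α}/(α−1) + C₉·(C₈+C₉)·t/(1−t)². In particular the limiting value depends on M and K only through the ratio t = K/(M+1), so the linear scaling (M+1) ∼ K asymptotically preserves the approximate uplink SIR distribution for ZF receivers. -/
open Real Filter Finset MeasureTheory

set_option maxHeartbeats 2000000

/-- Along the linear scaling `K = t(M+1)`, the approximate uplink SIR distribution of
Theorem 3 (ZF receivers, zero noise) converges to a limit depending only on `t = K/(M+1)`: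
linear scaling asymptotically preserves the SIR distribution for ZF receivers. -/
theorem zf_linear_scaling_limit
    (N : ℕ) (hN : 1 ≤ N) (α ε : ℝ) (hα : 2 < α) (hε0 : 0 ≤ ε) (hε1 : ε ≤ 1)
    (η : ℝ) (hη : η = (N : ℝ) * ((N.factorial : ℝ) ^ (-(1 : ℝ) / N)))
    (C₈ C₉ : ℝ)
    (hC₈ : C₈ = 2 * Real.Gamma (ε / 2 + 1) ^ α / ((α - 2) + 2 * Real.Gamma (ε / 2 + 1) ^ α))
    (hC₉ : C₉ = 2 * Real.Gamma (ε / 2 + 1) ^ α / (α - 2))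
    (C₆ C₇ : ℝ → ℝ → ℝ)
    (hC₆ : ∀ M K : ℝ, 0 < K → K < M → C₆ M K =
      C₉ * (1 / (M - K + 1) + 1 / (M + 1) + M * (K - 1) / (M - K + 1) ^ 2)
        + M * (K - 1) * C₈ / (M - K + 1) ^ 2)
    (hC₇ : ∀ M K : ℝ, 0 < K → K < M → C₇ M K =
      (M / (M + 1)) * Real.Gamma (ε + 1) ^ α / (α - 1)
        + (1 / (M + 1) + (K - 1) * M / (M - K + 1) ^ 2) * C₉ ^ 2
        + ((K - 1) * M / (M - K + 1) ^ 2) * C₈ * C₉)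
    (P : ℝ → ℝ → ℝ → ℝ)
    (hP : ∀ M K T : ℝ, 0 < K → K < M → 0 < T → P M K T =
      ∑ n ∈ Finset.Icc 1 N, (N.choose n : ℝ) * (-1 : ℝ) ^ (n + 1) *
        ∫ s in Set.Ioi (0 : ℝ),
          Real.exp (-((n : ℝ) * η * T *
              (C₆ M K * s ^ (α * (1 - ε) / 2) + C₇ M K * s ^ (α * (1 - ε)))) - s))
    (t : ℝ) (ht0 : 0 < t) (ht1 : t < 1) (T : ℝ) (hT : 0 < T) :
    Tendsto (fun M : ℝ => P M (t * (M + 1)) T) atTop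
      (nhds (∑ n ∈ Finset.Icc 1 N, (N.choose n : ℝ) * (-1 : ℝ) ^ (n + 1) *
        ∫ s in Set.Ioi (0 : ℝ),
          Real.exp (-((n : ℝ) * η * T *
              (((C₈ + C₉) * t / (1 - t) ^ 2) * s ^ (α * (1 - ε) / 2)
                + (Real.Gamma (ε + 1) ^ α / (α - 1)
                    + C₉ * (C₈ + C₉) * t / (1 - t) ^ 2) * s ^ (α * (1 - ε)))) - s))) := by
  have h1t : (0:ℝ) < 1 - t := by linarith
  have hΓ2 : 0 < Real.Gamma (ε / 2 + 1) := Real.Gamma_pos_of_pos (by linarith)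
  have hΓ2α : 0 < Real.Gamma (ε / 2 + 1) ^ α := Real.rpow_pos_of_pos hΓ2 α
  have hC₈0 : 0 ≤ C₈ := by
    rw [hC₈]; exact div_nonneg (by positivity) (by nlinarith)
  have hC₉0 : 0 ≤ C₉ := by
    rw [hC₉]; exact div_nonneg (by positivity) (by linarith)
  have hη0 : 0 ≤ η := by
    rw [hη]
    have h1 : (0:ℝ) ≤ (N.factorial : ℝ) ^ (-(1 : ℝ) / N) :=
      Real.rpow_nonneg (Nat.cast_nonneg _) _
    positivity
  have hp0 : (0:ℝ) ≤ α * (1 - ε) / 2 := by nlinarith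
  have hq0 : (0:ℝ) ≤ α * (1 - ε) := by nlinarith
  -- eventual basic facts along the scaling
  have hev : ∀ᶠ M : ℝ in atTop,
      0 < t * (M + 1) ∧ t * (M + 1) < M ∧ 1 ≤ t * (M + 1) ∧ 0 < M := by
    filter_upwards [eventually_gt_atTop (t / (1 - t)), eventually_ge_atTop (1 / t),
      eventually_gt_atTop (0:ℝ)] with M h1 h2 h3
    have hA : t < M * (1 - t) := by
      have := (div_lt_iff₀ h1t).mp h1; linarith
    have hB : 1 ≤ M * t := (div_le_iff₀ ht0).mp h2
    exact ⟨by positivity, by nlinarith, by nlinarith, h3⟩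
  -- the coefficient functions as continuous functions of x = 1/(M+1)
  set g₆ : ℝ → ℝ := fun x => C₉ * (x / (1 - t) + x + (1 - x) * (t - x) / (1 - t) ^ 2)
      + (1 - x) * (t - x) * C₈ / (1 - t) ^ 2 with hg₆
  set g₇ : ℝ → ℝ := fun x => (1 - x) * Real.Gamma (ε + 1) ^ α / (α - 1)
      + (x + (t - x) * (1 - x) / (1 - t) ^ 2) * C₉ ^ 2
      + ((t - x) * (1 - x) / (1 - t) ^ 2) * C₈ * C₉ with hg₇
  have hg₆c : Continuous g₆ := by rw [hg₆]; fun_prop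
  have hg₇c : Continuous g₇ := by rw [hg₇]; fun_prop
  have h1M : Tendsto (fun M : ℝ => 1 / (M + 1)) atTop (nhds 0) := by
    have h := (tendsto_atTop_add_const_right atTop (1:ℝ) tendsto_id).inv_tendsto_atTop
    refine h.congr (fun M => ?_)
    simp [one_div]
  have h6eq : ∀ᶠ M : ℝ in atTop, C₆ M (t * (M + 1)) = g₆ (1 / (M + 1)) := by
    filter_upwards [hev] with M ⟨hK0, hKM, hK1, hM0⟩
    rw [hC₆ _ _ hK0 hKM, hg₆]
    have hM1 : (0:ℝ) < M + 1 := by linarith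
    have hMK : (0:ℝ) < M - t * (M + 1) + 1 := by linarith
    have h1 : M - t * (M + 1) + 1 ≠ 0 := hMK.ne'
    have h2 : M + 1 ≠ 0 := hM1.ne'
    have h3 : (1:ℝ) - t ≠ 0 := h1t.ne'
    field_simp
    ring
  have h7eq : ∀ᶠ M : ℝ in atTop, C₇ M (t * (M + 1)) = g₇ (1 / (M + 1)) := by
    filter_upwards [hev] with M ⟨hK0, hKM, hK1, hM0⟩
    rw [hC₇ _ _ hK0 hKM, hg₇]
    have hM1 : (0:ℝ) < M + 1 := by linarith
    have hMK : (0:ℝ) < M - t * (M + 1) + 1 := by linarith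
    have h1 : M - t * (M + 1) + 1 ≠ 0 := hMK.ne'
    have h2 : M + 1 ≠ 0 := hM1.ne'
    have h3 : (1:ℝ) - t ≠ 0 := h1t.ne'
    have h4 : α - 1 ≠ 0 := by intro h; nlinarith
    have h1' : M - (M + 1) * t + 1 ≠ 0 := ne_of_gt (by linarith)
    field_simp
    ring
  have h6 : Tendsto (fun M : ℝ => C₆ M (t * (M + 1))) atTop
      (nhds ((C₈ + C₉) * t / (1 - t) ^ 2)) := by
    have h := (hg₆c.tendsto 0).comp h1M
    have hg0 : g₆ 0 = (C₈ + C₉) * t / (1 - t) ^ 2 := by rw [hg₆]; ring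
    rw [hg0] at h
    exact h.congr' (Filter.EventuallyEq.symm h6eq)
  have h7 : Tendsto (fun M : ℝ => C₇ M (t * (M + 1))) atTop
      (nhds (Real.Gamma (ε + 1) ^ α / (α - 1) + C₉ * (C₈ + C₉) * t / (1 - t) ^ 2)) := by
    have h := (hg₇c.tendsto 0).comp h1M
    have hg0 : g₇ 0 = Real.Gamma (ε + 1) ^ α / (α - 1) + C₉ * (C₈ + C₉) * t / (1 - t) ^ 2 := by
      rw [hg₇]; ring
    rw [hg0] at h
    exact h.congr' (Filter.EventuallyEq.symm h7eq)
  -- eventual nonnegativity of the coefficients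
  have h6nn : ∀ᶠ M : ℝ in atTop, 0 ≤ C₆ M (t * (M + 1)) := by
    filter_upwards [hev] with M ⟨hK0, hKM, hK1, hM0⟩
    rw [hC₆ _ _ hK0 hKM]
    have hM1 : (0:ℝ) < M + 1 := by linarith
    have hMK : (0:ℝ) < M - t * (M + 1) + 1 := by linarith
    have hK1' : (0:ℝ) ≤ t * (M + 1) - 1 := by linarith
    have hMK0 : (0:ℝ) ≤ M * (t * (M + 1) - 1) := mul_nonneg hM0.le hK1'
    apply add_nonneg
    · exact mul_nonneg hC₉0 (add_nonneg (add_nonneg (by positivity) (by positivity))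
        (div_nonneg hMK0 (by positivity)))
    · exact div_nonneg (mul_nonneg hMK0 hC₈0) (by positivity)
  have h7nn : ∀ᶠ M : ℝ in atTop, 0 ≤ C₇ M (t * (M + 1)) := by
    filter_upwards [hev] with M ⟨hK0, hKM, hK1, hM0⟩
    rw [hC₇ _ _ hK0 hKM]
    have hM1 : (0:ℝ) < M + 1 := by linarith
    have hMK : (0:ℝ) < M - t * (M + 1) + 1 := by linarith
    have hK1' : (0:ℝ) ≤ t * (M + 1) - 1 := by linarith
    have hΓ1 : 0 < Real.Gamma (ε + 1) := Real.Gamma_pos_of_pos (by linarith)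
    have hΓ1α : 0 < Real.Gamma (ε + 1) ^ α := Real.rpow_pos_of_pos hΓ1 α
    have hα1 : (0:ℝ) < α - 1 := by linarith
    have hKM0 : (0:ℝ) ≤ (t * (M + 1) - 1) * M := mul_nonneg hK1' hM0.le
    apply add_nonneg
    apply add_nonneg
    · positivity
    · exact mul_nonneg (add_nonneg (by positivity) (div_nonneg hKM0 (by positivity)))
        (by positivity)
    · exact mul_nonneg (mul_nonneg (div_nonneg hKM0 (by positivity)) hC₈0) hC₉0
  -- continuity of the integrand in s
  have hcp : Continuous fun s : ℝ => s ^ (α * (1 - ε) / 2) := Real.continuous_rpow_const hp0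
  have hcq : Continuous fun s : ℝ => s ^ (α * (1 - ε)) := Real.continuous_rpow_const hq0
  -- convergence of each integral
  have hint : ∀ n : ℕ,
      Tendsto (fun M : ℝ => ∫ s in Set.Ioi (0 : ℝ),
          Real.exp (-((n : ℝ) * η * T *
              (C₆ M (t * (M + 1)) * s ^ (α * (1 - ε) / 2)
                + C₇ M (t * (M + 1)) * s ^ (α * (1 - ε)))) - s)) atTop
        (nhds (∫ s in Set.Ioi (0 : ℝ),
          Real.exp (-((n : ℝ) * η * T *
              (((C₈ + C₉) * t / (1 - t) ^ 2) * s ^ (α * (1 - ε) / 2)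
                + (Real.Gamma (ε + 1) ^ α / (α - 1)
                    + C₉ * (C₈ + C₉) * t / (1 - t) ^ 2) * s ^ (α * (1 - ε)))) - s))) := by
    intro n
    apply tendsto_integral_filter_of_dominated_convergence (fun s => Real.exp (-s))
    · apply Eventually.of_forall
      intro M
      exact ((Real.continuous_exp.comp (((continuous_const.mul ((continuous_const.mul hcp).add
        (continuous_const.mul hcq))).neg.sub continuous_id))).aestronglyMeasurable)
    · filter_upwards [h6nn, h7nn] with M hc6 hc7
      rw [ae_restrict_iff' measurableSet_Ioi]
      apply Eventually.of_forall
      intro s hs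
      have hs0 : (0:ℝ) ≤ s := (Set.mem_Ioi.mp hs).le
      have hX : 0 ≤ (n : ℝ) * η * T *
          (C₆ M (t * (M + 1)) * s ^ (α * (1 - ε) / 2)
            + C₇ M (t * (M + 1)) * s ^ (α * (1 - ε))) :=
        mul_nonneg (mul_nonneg (mul_nonneg (Nat.cast_nonneg n) hη0) hT.le)
          (add_nonneg (mul_nonneg hc6 (Real.rpow_nonneg hs0 _))
            (mul_nonneg hc7 (Real.rpow_nonneg hs0 _)))
      rw [Real.norm_eq_abs, Real.abs_exp]
      exact Real.exp_le_exp.2 (by linarith)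
    · exact (by simpa using exp_neg_integrableOn_Ioi (0:ℝ) one_pos :
        IntegrableOn (fun s : ℝ => Real.exp (-s)) (Set.Ioi 0))
    · apply Eventually.of_forall
      intro s
      have h := (((h6.mul_const (s ^ (α * (1 - ε) / 2))).add
        (h7.mul_const (s ^ (α * (1 - ε))))).const_mul ((n : ℝ) * η * T)).neg.sub_const s
      exact (Real.continuous_exp.tendsto _).comp h
  have hsum : Tendsto (fun M : ℝ =>
      ∑ n ∈ Finset.Icc 1 N, (N.choose n : ℝ) * (-1 : ℝ) ^ (n + 1) *
        ∫ s in Set.Ioi (0 : ℝ),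
          Real.exp (-((n : ℝ) * η * T *
              (C₆ M (t * (M + 1)) * s ^ (α * (1 - ε) / 2)
                + C₇ M (t * (M + 1)) * s ^ (α * (1 - ε)))) - s)) atTop
      (nhds (∑ n ∈ Finset.Icc 1 N, (N.choose n : ℝ) * (-1 : ℝ) ^ (n + 1) *
        ∫ s in Set.Ioi (0 : ℝ),
          Real.exp (-((n : ℝ) * η * T *
              (((C₈ + C₉) * t / (1 - t) ^ 2) * s ^ (α * (1 - ε) / 2)
                + (Real.Gamma (ε + 1) ^ α / (α - 1)
                    + C₉ * (C₈ + C₉) * t / (1 - t) ^ 2) * s ^ (α * (1 - ε)))) - s))) :=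
    tendsto_finset_sum _ fun n _ => (hint n).const_mul _
  apply hsum.congr'
  filter_upwards [hev] with M ⟨hK0, hKM, _, _⟩
  exact (hP M _ T hK0 hKM hT).symm
end

section
/- Let N ≥ 1 be an integer and set η = N·(N!)^{−1/N}. Then for every x ≥ 0, the cumulative distribution function of the Gamma distribution with shape N and rate N satisfies (1/Γ(N))·∫₀^{Nx} u^{N−1}·e^{−u} du ≥ (1 − e^{−η·x})^N. -/
open Real
open Set Filter MeasureTheory intervalIntegral


lemma f_cont (n : ℕ) : Continuous (fun u : ℝ => u ^ n * Real.exp (-u)) := by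
  continuity

lemma f_integrable (n : ℕ) :
    IntegrableOn (fun u : ℝ => u ^ n * Real.exp (-u)) (Ioi 0) := by
  have h := Real.GammaIntegral_convergent (s := (n : ℝ) + 1) (by positivity)
  refine h.congr_fun (fun x hx => ?_) measurableSet_Ioi
  have hx0 : (0:ℝ) < x := hx
  simp only [add_sub_cancel_right, Real.rpow_natCast]
  ring

lemma F_tendsto (n : ℕ) :
    Tendsto (fun s : ℝ => ∫ u in (0:ℝ)..s, u ^ n * Real.exp (-u)) atTop
      (nhds (n.factorial : ℝ)) := by
  have h := MeasureTheory.intervalIntegral_tendsto_integral_Ioi (μ := volume)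
    (0:ℝ) (f_integrable n) (tendsto_id (α := ℝ))
  convert h using 2
  · rfl
  have : (∫ x in Ioi (0:ℝ), x ^ n * Real.exp (-x))
      = ∫ x in Ioi (0:ℝ), Real.exp (-x) * x ^ ((n:ℝ) + 1 - 1) := by
    refine setIntegral_congr_fun measurableSet_Ioi (fun x hx => ?_)
    have hx0 : (0:ℝ) < x := hx
    rw [add_sub_cancel_right, Real.rpow_natCast]
    ring
  rw [this, ← Real.Gamma_eq_integral (by positivity), Real.Gamma_nat_eq_factorial]

lemma F_deriv (n : ℕ) (s : ℝ) :
    HasDerivAt (fun s : ℝ => ∫ u in (0:ℝ)..s, u ^ n * Real.exp (-u))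
      (s ^ n * Real.exp (-s)) s :=
  intervalIntegral.integral_hasDerivAt_right ((f_cont n).intervalIntegrable _ _)
    ((f_cont n).stronglyMeasurableAtFilter _ _) (f_cont n).continuousAt

lemma G_deriv (n : ℕ) (l : ℝ) (s : ℝ) :
    HasDerivAt (fun s : ℝ => (n.factorial : ℝ) * (1 - Real.exp (-(l * s))) ^ (n+1))
      (((n+1).factorial : ℝ) * l * Real.exp (-(l * s)) * (1 - Real.exp (-(l * s))) ^ n) s := by
  have h1 : HasDerivAt (fun s : ℝ => 1 - Real.exp (-(l * s))) (l * Real.exp (-(l * s))) s := by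
    have := ((hasDerivAt_id s).const_mul l).neg.exp
    have h' := this.const_sub 1
    simp only [id] at h'
    refine h'.congr_deriv ?_
    simp only [Pi.neg_apply]; ring
  have h2 := (h1.pow (n+1)).const_mul (n.factorial : ℝ)
  refine h2.congr_deriv ?_
  push_cast [Nat.factorial_succ]
  ring

lemma G_tendsto (n : ℕ) (l : ℝ) (hl0 : 0 < l) :
    Tendsto (fun s : ℝ => (n.factorial : ℝ) * (1 - Real.exp (-(l * s))) ^ (n+1)) atTop
      (nhds (n.factorial : ℝ)) := by
  have h : Tendsto (fun s : ℝ => Real.exp (-(l * s))) atTop (nhds 0) := by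
    apply Real.tendsto_exp_atBot.comp
    have : Tendsto (fun x : ℝ => -l * x) atTop atBot :=
      Filter.Tendsto.const_mul_atTop_of_neg (by linarith : -l < 0) tendsto_id
    convert this using 2 with x
    ring
  have := ((h.const_sub 1).pow (n+1)).const_mul (n.factorial : ℝ)
  simpa using this

lemma key_ineq (y : ℝ) (hy : 0 ≤ y) :
    y * Real.exp (-(y/2)) ≤ 1 - Real.exp (-y) := by
  have h := Real.self_le_sinh_iff.mpr (by positivity : (0:ℝ) ≤ y/2)
  rw [Real.sinh_eq] at h
  have h1 : Real.exp (y/2) * Real.exp (-(y/2)) = 1 := by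
    rw [← Real.exp_add]; norm_num
  have h2 : Real.exp (-(y/2)) * Real.exp (-(y/2)) = Real.exp (-y) := by
    rw [← Real.exp_add]; ring_nf
  have hE : 0 < Real.exp (-(y/2)) := Real.exp_pos _
  nlinarith [mul_le_mul_of_nonneg_right (by linarith : y ≤ (Real.exp (y/2) - Real.exp (-(y/2)))/2 * 2) hE.le]

lemma one_sub_exp_pos {y : ℝ} (hy : 0 < y) : 0 < 1 - Real.exp (-y) := by
  have : Real.exp (-y) < 1 := Real.exp_lt_one_iff.mpr (by linarith)
  linarith

lemma inner_hasDeriv (l u : ℝ) :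
    HasDerivAt (fun u : ℝ => 1 - Real.exp (-(l * u))) (l * Real.exp (-(l * u))) u := by
  have := ((hasDerivAt_id u).const_mul l).neg.exp
  have h' := this.const_sub 1
  simp only [id] at h'
  refine h'.congr_deriv ?_
  simp only [Pi.neg_apply]; ring

lemma phi_hasDeriv (n : ℕ) (l : ℝ) (hl0 : 0 < l) (u : ℝ) (hu : 0 < u) :
    HasDerivAt (fun u : ℝ => (n:ℝ) * (Real.log (l*u) - Real.log (1 - Real.exp (-(l*u)))) + (l-1)*u)
      ((n:ℝ) * (u⁻¹ - l * Real.exp (-(l*u)) / (1 - Real.exp (-(l*u)))) + (l-1)) u := by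
  have hlu : 0 < l * u := mul_pos hl0 hu
  have hE : 0 < 1 - Real.exp (-(l*u)) := one_sub_exp_pos hlu
  have h1 : HasDerivAt (fun u : ℝ => Real.log (l*u)) u⁻¹ u := by
    have := ((hasDerivAt_id u).const_mul l).log hlu.ne'
    simp only [id] at this
    convert this using 1
    field_simp
  have h2 : HasDerivAt (fun u : ℝ => Real.log (1 - Real.exp (-(l*u))))
      (l * Real.exp (-(l*u)) / (1 - Real.exp (-(l*u)))) u :=
    (inner_hasDeriv l u).log hE.ne'
  exact (((h1.sub h2).const_mul (n:ℝ)).add ((hasDerivAt_id u).const_mul (l-1))).congr_deriv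
    (by ring)

lemma phi'_hasDeriv (n : ℕ) (l : ℝ) (hl0 : 0 < l) (u : ℝ) (hu : 0 < u) :
    HasDerivAt (fun u : ℝ => (n:ℝ) * (u⁻¹ - l * Real.exp (-(l*u)) / (1 - Real.exp (-(l*u)))) + (l-1))
      ((n:ℝ) * (-(u^2)⁻¹ + l^2 * Real.exp (-(l*u)) / (1 - Real.exp (-(l*u)))^2)) u := by
  have hlu : 0 < l * u := mul_pos hl0 hu
  have hE : 0 < 1 - Real.exp (-(l*u)) := one_sub_exp_pos hlu
  have h1 : HasDerivAt (fun u : ℝ => u⁻¹) (-(u^2)⁻¹) u := by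
    simpa using hasDerivAt_inv hu.ne'
  have hexp : HasDerivAt (fun u : ℝ => Real.exp (-(l*u))) (-(l * Real.exp (-(l*u)))) u := by
    have := (inner_hasDeriv l u).const_sub 1
    simpa using this
  have h2 : HasDerivAt (fun u : ℝ => l * Real.exp (-(l*u)) / (1 - Real.exp (-(l*u))))
      (-(l^2 * Real.exp (-(l*u)) / (1 - Real.exp (-(l*u)))^2)) u := by
    have := ((hexp.const_mul l).div (inner_hasDeriv l u) hE.ne')
    refine this.congr_deriv ?_
    field_simp
    ring
  exact (((h1.sub h2).const_mul (n:ℝ)).add_const (l-1)).congr_deriv (by ring)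

lemma phi_concave (n : ℕ) (l : ℝ) (hl0 : 0 < l) :
    ConcaveOn ℝ (Ioi 0)
      (fun u : ℝ => (n:ℝ) * (Real.log (l*u) - Real.log (1 - Real.exp (-(l*u)))) + (l-1)*u) := by
  have hint : interior (Ioi (0:ℝ)) = Ioi 0 := interior_Ioi
  refine concaveOn_of_hasDerivWithinAt2_nonpos (convex_Ioi 0)
    (f' := fun u : ℝ => (n:ℝ) * (u⁻¹ - l * Real.exp (-(l*u)) / (1 - Real.exp (-(l*u)))) + (l-1))
    (f'' := fun u : ℝ => (n:ℝ) * (-(u^2)⁻¹ + l^2 * Real.exp (-(l*u)) / (1 - Real.exp (-(l*u)))^2))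
    (fun u hu => ((phi_hasDeriv n l hl0 u hu).continuousAt.continuousWithinAt))
    (fun u hu => ((phi_hasDeriv n l hl0 u (by rwa [hint] at hu)).hasDerivWithinAt))
    (fun u hu => ((phi'_hasDeriv n l hl0 u (by rwa [hint] at hu)).hasDerivWithinAt))
    (fun u hu => ?_)
  rw [hint] at hu
  have hu : (0:ℝ) < u := hu
  have hlu : 0 < l * u := mul_pos hl0 hu
  have hE : 0 < 1 - Real.exp (-(l*u)) := one_sub_exp_pos hlu
  -- key: (l*u)^2 * exp(-(l*u)) ≤ (1 - exp(-(l*u)))^2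
  have hk := key_ineq (l*u) hlu.le
  have hsq : (l*u) * Real.exp (-(l*u)/2) * ((l*u) * Real.exp (-(l*u)/2))
      ≤ (1 - Real.exp (-(l*u))) * (1 - Real.exp (-(l*u))) := by
    have h0 : 0 ≤ (l*u) * Real.exp (-(l*u)/2) := by positivity
    have hk' : (l*u) * Real.exp (-(l*u)/2) ≤ 1 - Real.exp (-(l*u)) := by
      convert hk using 3; ring
    exact mul_le_mul hk' hk' h0 hE.le
  have hhalf : Real.exp (-(l*u)/2) * Real.exp (-(l*u)/2) = Real.exp (-(l*u)) := by
    rw [← Real.exp_add]; ring_nf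
  have hmain : (l*u)^2 * Real.exp (-(l*u)) ≤ (1 - Real.exp (-(l*u)))^2 := by
    nlinarith [hsq]
  -- conclude: l^2 * E/(1-E)^2 ≤ (u^2)⁻¹
  have h2 : l^2 * Real.exp (-(l*u)) / (1 - Real.exp (-(l*u)))^2 ≤ (u^2)⁻¹ := by
    rw [div_le_iff₀ (by positivity)]
    rw [inv_mul_eq_div, le_div_iff₀ (by positivity)]
    calc l^2 * Real.exp (-(l*u)) * u^2 = (l*u)^2 * Real.exp (-(l*u)) := by ring
      _ ≤ (1 - Real.exp (-(l*u)))^2 := hmain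
  have hn : (0:ℝ) ≤ (n:ℝ) := Nat.cast_nonneg n
  nlinarith [h2]

lemma log_key (n : ℕ) (l : ℝ) (hl0 : 0 < l)
    (hlN : (((n+1).factorial : ℝ)) * l ^ (n+1) = 1) (u : ℝ) (hu : 0 < u) :
    Real.log (u ^ n * Real.exp (-u))
      - Real.log (((n+1).factorial : ℝ) * l * Real.exp (-(l*u)) * (1 - Real.exp (-(l*u)))^n)
      = (n:ℝ) * (Real.log (l*u) - Real.log (1 - Real.exp (-(l*u)))) + (l-1)*u := by
  have hlu : 0 < l * u := mul_pos hl0 hu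
  have hE : 0 < 1 - Real.exp (-(l*u)) := one_sub_exp_pos hlu
  have hfac : (0:ℝ) < ((n+1).factorial : ℝ) := by positivity
  have hlogfac : Real.log ((n+1).factorial : ℝ) + (n+1) * Real.log l = 0 := by
    have h := Real.log_mul hfac.ne' (by positivity : (0:ℝ) < l ^ (n+1)).ne'
    rw [hlN, Real.log_one, Real.log_pow] at h
    push_cast at h ⊢
    linarith
  have e1 : Real.log (u ^ n * Real.exp (-u)) = n * Real.log u - u := by
    rw [Real.log_mul (by positivity) (Real.exp_pos _).ne', Real.log_pow, Real.log_exp]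
    ring
  have e2 : Real.log (((n+1).factorial : ℝ) * l * Real.exp (-(l*u)) * (1 - Real.exp (-(l*u)))^n)
      = Real.log ((n+1).factorial : ℝ) + Real.log l - l*u + n * Real.log (1 - Real.exp (-(l*u))) := by
    rw [Real.log_mul (by positivity) (by positivity), Real.log_mul (by positivity) (Real.exp_pos _).ne',
      Real.log_mul hfac.ne' hl0.ne', Real.log_pow, Real.log_exp]
    ring
  have e3 : Real.log (l*u) = Real.log l + Real.log u := Real.log_mul hl0.ne' hu.ne'
  rw [e1, e2, e3]
  linear_combination (-1 : ℝ) * hlogfac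

lemma deriv_compare (n : ℕ) (l : ℝ) (hl0 : 0 < l)
    (hlN : (((n+1).factorial : ℝ)) * l ^ (n+1) = 1) (u : ℝ) (hu : 0 < u)
    (h : 0 ≤ (n:ℝ) * (Real.log (l*u) - Real.log (1 - Real.exp (-(l*u)))) + (l-1)*u) :
    ((n+1).factorial : ℝ) * l * Real.exp (-(l*u)) * (1 - Real.exp (-(l*u)))^n
        ≤ u ^ n * Real.exp (-u) := by
  have key := log_key n l hl0 hlN u hu
  have hlu : 0 < l * u := mul_pos hl0 hu
  have hE : 0 < 1 - Real.exp (-(l*u)) := one_sub_exp_pos hlu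
  have hG : (0:ℝ) < ((n+1).factorial : ℝ) * l * Real.exp (-(l*u)) * (1 - Real.exp (-(l*u)))^n := by
    positivity
  have hF : (0:ℝ) < u ^ n * Real.exp (-u) := by positivity
  exact (Real.log_le_log_iff hG hF).mp (by linarith)

lemma deriv_compare' (n : ℕ) (l : ℝ) (hl0 : 0 < l)
    (hlN : (((n+1).factorial : ℝ)) * l ^ (n+1) = 1) (u : ℝ) (hu : 0 < u)
    (h : (n:ℝ) * (Real.log (l*u) - Real.log (1 - Real.exp (-(l*u)))) + (l-1)*u ≤ 0) :
    u ^ n * Real.exp (-u)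
      ≤ ((n+1).factorial : ℝ) * l * Real.exp (-(l*u)) * (1 - Real.exp (-(l*u)))^n := by
  have key := log_key n l hl0 hlN u hu
  have hlu : 0 < l * u := mul_pos hl0 hu
  have hE : 0 < 1 - Real.exp (-(l*u)) := one_sub_exp_pos hlu
  have hG : (0:ℝ) < ((n+1).factorial : ℝ) * l * Real.exp (-(l*u)) * (1 - Real.exp (-(l*u)))^n := by
    positivity
  have hF : (0:ℝ) < u ^ n * Real.exp (-u) := by positivity
  exact (Real.log_le_log_iff hF hG).mp (by linarith)

lemma phi_lb (n : ℕ) (l : ℝ) (hl0 : 0 < l) (u : ℝ) (hu : 0 < u) :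
    -u ≤ (n:ℝ) * (Real.log (l*u) - Real.log (1 - Real.exp (-(l*u)))) + (l-1)*u := by
  have hlu : 0 < l * u := mul_pos hl0 hu
  have hE : 0 < 1 - Real.exp (-(l*u)) := one_sub_exp_pos hlu
  have h1 : 1 - Real.exp (-(l*u)) ≤ l*u := by
    have := Real.add_one_le_exp (-(l*u))
    linarith
  have h2 : Real.log (1 - Real.exp (-(l*u))) ≤ Real.log (l*u) :=
    Real.log_le_log hE h1
  have hn : (0:ℝ) ≤ (n:ℝ) := Nat.cast_nonneg n
  nlinarith

lemma phi_stays_neg (n : ℕ) (l : ℝ) (hl0 : 0 < l) (u₁ t : ℝ) (hu₁ : 0 < u₁)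
    (hneg : (n:ℝ) * (Real.log (l*u₁) - Real.log (1 - Real.exp (-(l*u₁)))) + (l-1)*u₁ < 0)
    (ht : u₁ ≤ t) :
    (n:ℝ) * (Real.log (l*t) - Real.log (1 - Real.exp (-(l*t)))) + (l-1)*t ≤ 0 := by
  by_contra hpos
  push_neg at hpos
  rcases eq_or_lt_of_le ht with rfl | hlt
  · exact absurd hpos (not_lt.mpr hneg.le)
  set φ : ℝ → ℝ := fun u : ℝ => (n:ℝ) * (Real.log (l*u) - Real.log (1 - Real.exp (-(l*u)))) + (l-1)*u
    with hφ
  have hnegφ : φ u₁ < 0 := hneg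
  have hposφ : 0 < φ t := hpos
  set ε := min (u₁/2) (-(φ u₁)/2) with hε
  have hε0 : 0 < ε := lt_min (by linarith) (by linarith)
  have hεu₁ : ε < u₁ := lt_of_le_of_lt (min_le_left _ _) (by linarith)
  have hεφ : ε < -(φ u₁) := lt_of_le_of_lt (min_le_right _ _) (by linarith)
  have hεt : ε < t := lt_trans hεu₁ hlt
  have hden : 0 < t - ε := by linarith
  set a := (t - u₁)/(t - ε) with ha
  set b := (u₁ - ε)/(t - ε) with hb
  have ha0 : 0 ≤ a := div_nonneg (by linarith) hden.le
  have hb0 : 0 ≤ b := div_nonneg (by linarith) hden.le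
  have hab : a + b = 1 := by
    rw [ha, hb, ← add_div, div_eq_one_iff_eq hden.ne']
    ring
  have hcomb : a • ε + b • t = u₁ := by
    simp only [smul_eq_mul, ha, hb]
    field_simp
    ring
  have hconc := (phi_concave n l hl0).2 (mem_Ioi.mpr hε0) (mem_Ioi.mpr (lt_trans hε0 hεt))
    ha0 hb0 hab
  rw [hcomb] at hconc
  simp only [smul_eq_mul] at hconc
  have hφε : -ε ≤ φ ε := phi_lb n l hl0 ε hε0
  have h1 : a * (-ε) ≤ a * φ ε := mul_le_mul_of_nonneg_left hφε ha0
  have h2 : (0:ℝ) ≤ b * φ t := mul_nonneg hb0 hposφ.le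
  have ha1 : a ≤ 1 := by linarith
  have hstep : -ε ≤ a * (-ε) := by nlinarith
  have : -ε ≤ φ u₁ := by
    have : a * φ ε + b * φ t ≤ φ u₁ := hconc
    linarith
  linarith


private lemma D0 (n : ℕ) (l : ℝ) :
    (∫ u in (0:ℝ)..(0:ℝ), u ^ n * Real.exp (-u))
      - (n.factorial : ℝ) * (1 - Real.exp (-(l * 0))) ^ (n+1) = 0 := by
  rw [intervalIntegral.integral_same]
  norm_num

private lemma core (n : ℕ) (l : ℝ) (hl0 : 0 < l)
    (hlN : ((n+1).factorial : ℝ) * l ^ (n+1) = 1) (s : ℝ) (hs : 0 ≤ s) :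
    (n.factorial : ℝ) * (1 - Real.exp (-(l * s))) ^ (n+1)
      ≤ ∫ u in (0:ℝ)..s, u ^ n * Real.exp (-u) := by
  set D : ℝ → ℝ := fun t =>
    (∫ u in (0:ℝ)..t, u ^ n * Real.exp (-u))
      - (n.factorial : ℝ) * (1 - Real.exp (-(l * t))) ^ (n+1) with hDdef
  have hD : ∀ t : ℝ, HasDerivAt D
      (t ^ n * Real.exp (-t)
        - ((n+1).factorial : ℝ) * l * Real.exp (-(l * t)) * (1 - Real.exp (-(l * t))) ^ n) t :=
    fun t => (F_deriv n t).sub (G_deriv n l t)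
  have hdiff : Differentiable ℝ D := fun t => (hD t).differentiableAt
  have hG0 : ((n+1).factorial : ℝ) * l * Real.exp (-(l * 0)) * (1 - Real.exp (-(l * 0))) ^ n
      ≤ 0 ^ n * Real.exp (-(0:ℝ)) := by
    cases n with
    | zero =>
        have hl1 : l = 1 := by norm_num [Nat.factorial] at hlN; linarith
        simp [hl1, Nat.factorial]
    | succ m => simp
  suffices h : 0 ≤ D s by
    simpa [hDdef, sub_nonneg] using h
  by_cases hcase : ∀ u ∈ Icc (0:ℝ) s,
      ((n+1).factorial : ℝ) * l * Real.exp (-(l * u)) * (1 - Real.exp (-(l * u))) ^ n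
        ≤ u ^ n * Real.exp (-u)
  · -- derivative nonneg on [0, s]
    have hmono : MonotoneOn D (Icc 0 s) := by
      apply monotoneOn_of_deriv_nonneg (convex_Icc 0 s) hdiff.continuous.continuousOn
        (hdiff.differentiableOn)
      intro u hu
      rw [interior_Icc] at hu
      rw [(hD u).deriv]
      have := hcase u ⟨hu.1.le, hu.2.le⟩
      linarith
    have := hmono ⟨le_refl 0, hs⟩ ⟨hs, le_refl s⟩ hs
    rw [hDdef] at this ⊢
    simpa [D0 n l] using this
  · push_neg at hcase
    obtain ⟨u₁, hu₁mem, hu₁⟩ := hcase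
    have hu₁pos : 0 < u₁ := by
      rcases eq_or_lt_of_le hu₁mem.1 with rfl | h
      · exact absurd hG0 (not_le.mpr hu₁)
      · exact h
    have hφ₁ : (n:ℝ) * (Real.log (l*u₁) - Real.log (1 - Real.exp (-(l*u₁)))) + (l-1)*u₁ < 0 := by
      by_contra hcon
      push_neg at hcon
      exact absurd (deriv_compare n l hl0 hlN u₁ hu₁pos hcon) (not_le.mpr hu₁)
    have hanti : AntitoneOn D (Ici s) := by
      apply antitoneOn_of_deriv_nonpos (convex_Ici s) hdiff.continuous.continuousOn
        (hdiff.differentiableOn)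
      intro t ht
      rw [interior_Ici] at ht
      have htpos : 0 < t := lt_of_lt_of_le hu₁pos (le_trans hu₁mem.2 (le_of_lt ht))
      rw [(hD t).deriv]
      have hphi := phi_stays_neg n l hl0 u₁ t hu₁pos hφ₁ (le_trans hu₁mem.2 ht.le)
      have := deriv_compare' n l hl0 hlN t htpos hphi
      linarith
    have hlim : Tendsto D atTop (nhds 0) := by
      have := (F_tendsto n).sub (G_tendsto n l hl0)
      simpa using this
    refine le_of_tendsto hlim ?_
    filter_upwards [eventually_ge_atTop s] with t ht
    exact hanti (mem_Ici.mpr le_rfl) (mem_Ici.mpr ht) ht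

/-- Alzer's inequality: the CDF of a Gamma(shape `N`, rate `N`) random variable satisfies
`P(N, Nx) ≥ (1 − e^{−ηx})^N` with `η = N (N!)^{−1/N}`. -/
theorem alzer_inequality (N : ℕ) (hN : 1 ≤ N)
    (η : ℝ) (hη : η = (N : ℝ) * ((N.factorial : ℝ) ^ (-(1 : ℝ) / N))) :
    ∀ x : ℝ, 0 ≤ x →
      (1 - Real.exp (-(η * x))) ^ N
        ≤ (1 / Real.Gamma N) * ∫ u in (0 : ℝ)..((N : ℝ) * x), u ^ (N - 1) * Real.exp (-u) := by
  intro x hx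
  obtain ⟨n, rfl⟩ : ∃ n, N = n + 1 := ⟨N - 1, (Nat.succ_pred_eq_of_pos hN).symm⟩
  set l : ℝ := ((Nat.factorial (n+1) : ℝ)) ^ (-(1 : ℝ) / ((n+1 : ℕ) : ℝ)) with hl
  have hfacpos : (0:ℝ) < ((n+1).factorial : ℝ) := by positivity
  have hl0 : 0 < l := Real.rpow_pos_of_pos hfacpos _
  have hlN : ((n+1).factorial : ℝ) * l ^ (n+1) = 1 := by
    rw [hl, ← Real.rpow_natCast (((n+1).factorial : ℝ) ^ (-(1 : ℝ) / ((n+1 : ℕ) : ℝ))) (n+1),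
      ← Real.rpow_mul hfacpos.le]
    have : (-(1:ℝ) / ((n+1 : ℕ) : ℝ)) * (((n+1:ℕ)) : ℝ) = -1 := by
      have : ((n+1 : ℕ) : ℝ) ≠ 0 := by positivity
      field_simp
    rw [this, Real.rpow_neg_one]
    field_simp
  have hs : 0 ≤ ((n+1 : ℕ) : ℝ) * x := by positivity
  have hcore := core n l hl0 hlN (((n+1 : ℕ) : ℝ) * x) hs
  have hηx : η * x = l * (((n+1 : ℕ) : ℝ) * x) := by
    rw [hη, hl]
    push_cast
    ring
  have hΓ : Real.Gamma (((n+1 : ℕ)) : ℝ) = (n.factorial : ℝ) := by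
    push_cast
    exact_mod_cast Real.Gamma_nat_eq_factorial n
  have hfn : (0:ℝ) < (n.factorial : ℝ) := by positivity
  have hexp : (n + 1) - 1 = n := rfl
  rw [hΓ, hexp]
  calc (1 - Real.exp (-(η * x))) ^ (n+1)
      = (1 / (n.factorial : ℝ)) * ((n.factorial : ℝ)
          * (1 - Real.exp (-(l * (((n+1 : ℕ) : ℝ) * x)))) ^ (n+1)) := by
        rw [hηx]; field_simp
    _ ≤ (1 / (n.factorial : ℝ)) * ∫ u in (0:ℝ)..(((n+1 : ℕ) : ℝ) * x), u ^ n * Real.exp (-u) := by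
        apply mul_le_mul_of_nonneg_left hcore (by positivity)
end
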